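/- (Convergence of the inertial PC-algorithm I with outer-perturbation form, iPC I-1.) Let ν ∈ (0,1), γ ∈ (0,2), and let {α_k^{(1)}}, {α_k^{(2)}} ⊆ [0,1]. Let x^{-1}, x^0 ∈ H and let {x^k}, {y^k}, {β_k} satisfy, for every k ≥ 0: β_k > 0 with inf_k β_k > 0; y^k = P_C(x^k − β_k F(x^k)) + α_k^{(1)}(x^k − x^{k−1}); β_k‖F(x^k) − F(y^k − α_k^{(1)}(x^k − x^{k−1}))‖ ≤ ν‖x^k − y^k + α_k^{(1)}(x^k − x^{k−1})‖; d^k := (x^k − y^k + α_k^{(1)}(x^k − x^{k−1})) − β_k(F(x^k) − F(y^k − α_k^{(1)}(x^k − x^{k−1}))) ≠ 0; ρ_k := ⟨x^k − y^k + α_k^{(1)}(x^k − x^{k−1}), d^k⟩/‖d^k‖²; x^{k+1} = x^k − γ ρ_k d^k + α_k^{(2)}(x^k − x^{k−1}). If Σ_{k=0}^∞ α_k^{(i)}‖x^k − x^{k−1}‖ < +∞ for i = 1, 2, then {x^k} converges weakly (i.e., ⟨x^k, u⟩ → ⟨x̂, u⟩ for every u ∈ H) to some point x̂ ∈ SOL(C,F).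 -/

import Mathlib

/-!
Write `w^k = P_C(x^k - β_k F(x^k))`: the inertial terms added inside `y^k` cancel in every formula
of the method, which is therefore a projection–contraction step along `d^k` followed by an outer
perturbation `α_k^{(2)} (x^k - x^{k-1})` of summable norm. For every solution `p` the
projection–contraction step decreases `‖x^k - p‖²` by at least `κ ‖x^k - w^k‖²`, where
`κ = γ(2-γ)((1-ν)/(1+ν))²`. Summable perturbations preserve this quasi-Fejér behaviour: `‖x^k - p‖`
converges for every solution `p`, and `Σ ‖x^k - w^k‖²` is finite. Hence every weak cluster point of
`(x^k)` is a weak cluster point of `(w^k) ⊆ C` and, by monotonicity and Minty's lemma, a solution;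
Opial's argument then yields weak convergence of the whole sequence.
-/

open Filter Topology RealInnerProductSpace

section RealSequences

variable {a c s : ℕ → ℝ}

theorem exists_tendsto_of_le_add_of_summable (ha : BddBelow (Set.range a)) (hs : ∀ k, 0 ≤ s k)
    (hsum : Summable s) (hrec : ∀ k, a (k + 1) ≤ a k + s k) : ∃ l, Tendsto a atTop (𝓝 l) := by
  -- `a k + ∑_{j ≥ k} s j` is antitone and bounded below, and the tails tend to `0`.
  set T : ℕ → ℝ := fun k => ∑' j, s (j + k)
  have hT : ∀ k, T k = s k + T (k + 1) := fun k => by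
    simpa [T, add_assoc, add_comm 1 k] using ((summable_nat_add_iff k).2 hsum).tsum_eq_zero_add
  obtain ⟨m, hm⟩ := ha
  have hanti : Antitone (a + T) := antitone_nat_of_succ_le fun k => by
    simp only [Pi.add_apply]
    linarith [hrec k, hT k]
  have hbdd : BddBelow (Set.range (a + T)) := ⟨m, by
    rintro _ ⟨k, rfl⟩
    exact le_add_of_le_of_nonneg (hm ⟨k, rfl⟩) (tsum_nonneg fun j => hs _)⟩
  refine ⟨_, ((tendsto_atTop_ciInf hanti hbdd).sub (tendsto_sum_nat_add s)).congr fun k => ?_⟩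
  simp [T]

theorem exists_tendsto_of_sq_add_le_sq_add (ha : ∀ k, 0 ≤ a k) (hs : ∀ k, 0 ≤ s k)
    (hsum : Summable s) (hc : ∀ k, 0 ≤ c k) (hrec : ∀ k, a (k + 1) ^ 2 + c k ≤ (a k + s k) ^ 2) :
    ∃ l, Tendsto a atTop (𝓝 l) := by
  refine exists_tendsto_of_le_add_of_summable ⟨0, ?_⟩ hs hsum fun k => ?_
  · rintro _ ⟨k, rfl⟩
    exact ha k
  · refine (pow_le_pow_iff_left₀ (ha _) (add_nonneg (ha k) (hs k)) two_ne_zero).1 ?_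
    linarith [hrec k, hc k]

theorem summable_of_sq_add_le_sq_add (ha : ∀ k, 0 ≤ a k) (hs : ∀ k, 0 ≤ s k)
    (hsum : Summable s) (hc : ∀ k, 0 ≤ c k) (hrec : ∀ k, a (k + 1) ^ 2 + c k ≤ (a k + s k) ^ 2) :
    Summable c := by
  obtain ⟨l, hl⟩ := exists_tendsto_of_sq_add_le_sq_add ha hs hsum hc hrec
  obtain ⟨M, hM⟩ := hl.bddAbove_range
  obtain ⟨S, hS⟩ := hsum.tendsto_atTop_zero.bddAbove_range
  have hK : 0 ≤ 2 * M + S := by linarith [ha 0, hs 0, hM ⟨0, rfl⟩, hS ⟨0, rfl⟩]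
  have hstep : ∀ k, c k ≤ a k ^ 2 - a (k + 1) ^ 2 + (2 * M + S) * s k := fun k => by
    nlinarith [hrec k, hs k, mul_le_mul_of_nonneg_right (hM ⟨k, rfl⟩) (hs k),
      mul_le_mul_of_nonneg_right (hS ⟨k, rfl⟩) (hs k)]
  refine summable_of_sum_range_le hc (c := a 0 ^ 2 + (2 * M + S) * ∑' k, s k) fun n => ?_
  calc ∑ k ∈ Finset.range n, c k
      ≤ ∑ k ∈ Finset.range n, (a k ^ 2 - a (k + 1) ^ 2 + (2 * M + S) * s k) :=
        Finset.sum_le_sum fun k _ => hstep k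
    _ = a 0 ^ 2 - a n ^ 2 + (2 * M + S) * ∑ k ∈ Finset.range n, s k := by
        rw [Finset.sum_add_distrib, Finset.sum_range_sub', Finset.mul_sum]
    _ ≤ a 0 ^ 2 + (2 * M + S) * ∑' k, s k := by
        nlinarith [sq_nonneg (a n),
          mul_le_mul_of_nonneg_left (hsum.sum_le_tsum (Finset.range n) fun k _ => hs k) hK]

theorem tendsto_zero_of_summable_mul_sq {f : ℕ → ℝ} {κ : ℝ} (hκ : 0 < κ) (hf : ∀ k, 0 ≤ f k)
    (h : Summable fun k => κ * f k ^ 2) : Tendsto f atTop (𝓝 0) := by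
  have hsq : Tendsto (fun k => f k ^ 2) atTop (𝓝 0) := by
    simpa [hκ.ne'] using h.tendsto_atTop_zero.const_mul κ⁻¹
  simpa [Real.sqrt_sq (hf _)] using hsq.sqrt

end RealSequences

theorem exists_norm_le_of_tendsto_norm_sub {E : Type*} [SeminormedAddCommGroup E] {x : ℕ → E}
    {p : E} {r : ℝ} (h : Tendsto (fun k => ‖x k - p‖) atTop (𝓝 r)) : ∃ R, ∀ k, ‖x k‖ ≤ R := by
  obtain ⟨M, hM⟩ := h.bddAbove_range
  exact ⟨‖p‖ + M, fun k =>
    (norm_le_norm_add_norm_sub' (x k) p).trans (by gcongr; exact hM ⟨k, rfl⟩)⟩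

theorem norm_add_sub_sq_add_le {E : Type*} [SeminormedAddCommGroup E] {x z v p : E} {c : ℝ}
    (hc : 0 ≤ c) (h : ‖z - p‖ ^ 2 + c ≤ ‖x - p‖ ^ 2) :
    ‖z + v - p‖ ^ 2 + c ≤ (‖x - p‖ + ‖v‖) ^ 2 := by
  have hzx : ‖z - p‖ ≤ ‖x - p‖ :=
    (pow_le_pow_iff_left₀ (norm_nonneg _) (norm_nonneg _) two_ne_zero).1 (by linarith)
  have htri : ‖z + v - p‖ ≤ ‖z - p‖ + ‖v‖ := by
    rw [add_sub_right_comm]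
    exact norm_add_le _ _
  nlinarith [pow_le_pow_left₀ (norm_nonneg _) htri 2,
    mul_le_mul_of_nonneg_right hzx (norm_nonneg v)]

section Hilbert

variable {H : Type*} [NormedAddCommGroup H] [InnerProductSpace ℝ H]

def WeakTendsto {ι : Type*} (x : ι → H) (l : Filter ι) (a : H) : Prop :=
  ∀ u : H, Tendsto (fun i => ⟪x i, u⟫) l (𝓝 ⟪a, u⟫)

def viSol (C : Set H) (F : H → H) : Set H :=
  {p | p ∈ C ∧ ∀ z ∈ C, 0 ≤ ⟪F p, z - p⟫}

theorem exists_weakTendsto_of_norm_le [CompleteSpace H] {ι : Type*} {x : ι → H} {R : ℝ}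
    (hR : ∀ i, ‖x i‖ ≤ R) (V : Ultrafilter ι) : ∃ a, WeakTendsto x V a := by
  have hbound : ∀ u i, |⟪x i, u⟫| ≤ R * ‖u‖ := fun u i =>
    (abs_real_inner_le_norm _ _).trans (mul_le_mul_of_nonneg_right (hR i) (norm_nonneg u))
  have hlim : ∀ u, ∃ r, Tendsto (fun i => ⟪x i, u⟫) V (𝓝 r) := fun u => by
    obtain ⟨r, -, hr⟩ := (isCompact_Icc (a := -(R * ‖u‖)) (b := R * ‖u‖)).ultrafilter_le_nhds
      (V.map fun i => ⟪x i, u⟫) (by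
        rw [Ultrafilter.coe_map, le_principal_iff]
        exact mem_map.2 (univ_mem' fun i => abs_le.1 (hbound u i)))
    exact ⟨r, hr⟩
  choose f hf using hlim
  -- The `V`-limit `f` of the functionals `⟪x i, ·⟫` is bounded linear, hence `⟪a, ·⟫` by Riesz.
  let φ : H →L[ℝ] ℝ := LinearMap.mkContinuous
    { toFun := f
      map_add' := fun u v => tendsto_nhds_unique (hf (u + v)) <| by
        simpa only [inner_add_right] using (hf u).add (hf v)
      map_smul' := fun c u => tendsto_nhds_unique (hf (c • u)) <| by
        simpa only [real_inner_smul_right, RingHom.id_apply, smul_eq_mul] using (hf u).const_mul c }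
    R fun u => le_of_tendsto (hf u).norm (Eventually.of_forall fun i => hbound u i)
  exact ⟨(InnerProductSpace.toDual ℝ H).symm φ, fun u => by
    rw [InnerProductSpace.toDual_symm_apply]
    exact hf u⟩

theorem WeakTendsto.eq_of_tendsto_norm_sub {ι : Type*} {l V V' : Filter ι} [V.NeBot] [V'.NeBot]
    {x : ι → H} {p q : H} {rp rq : ℝ} (hp : Tendsto (fun i => ‖x i - p‖) l (𝓝 rp))
    (hq : Tendsto (fun i => ‖x i - q‖) l (𝓝 rq)) (hV : V ≤ l) (hV' : V' ≤ l)
    (hpV : WeakTendsto x V p) (hqV' : WeakTendsto x V' q) : p = q := by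
  have hpol : ∀ i, ⟪x i, p - q⟫ = (‖x i - q‖ ^ 2 - ‖x i - p‖ ^ 2 + ‖p‖ ^ 2 - ‖q‖ ^ 2) / 2 :=
    fun i => by
      rw [norm_sub_sq_real, norm_sub_sq_real, inner_sub_right]
      ring
  have hm : Tendsto (fun i => ⟪x i, p - q⟫) l
      (𝓝 ((rq ^ 2 - rp ^ 2 + ‖p‖ ^ 2 - ‖q‖ ^ 2) / 2)) := by
    simp_rw [hpol]
    exact ((((hq.pow 2).sub (hp.pow 2)).add_const _).sub_const _).div_const 2
  have h1 := tendsto_nhds_unique (hpV (p - q)) (hm.mono_left hV)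
  have h2 := tendsto_nhds_unique (hqV' (p - q)) (hm.mono_left hV')
  rw [← sub_eq_zero, ← real_inner_self_nonpos, inner_sub_left, h1, h2, sub_self]

/-- Opial's lemma, with weak cluster points taken along ultrafilters. -/
theorem exists_weakTendsto_of_tendsto_norm_sub [CompleteSpace H] {S : Set H} {x : ℕ → H}
    (hS : S.Nonempty) (hlim : ∀ p ∈ S, ∃ r, Tendsto (fun k => ‖x k - p‖) atTop (𝓝 r))
    (hclust : ∀ V : Ultrafilter ℕ, (V : Filter ℕ) ≤ atTop → ∀ a, WeakTendsto x V a → a ∈ S) :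
    ∃ a ∈ S, WeakTendsto x atTop a := by
  obtain ⟨p, hp⟩ := hS
  obtain ⟨r, hr⟩ := hlim p hp
  obtain ⟨R, hR⟩ := exists_norm_le_of_tendsto_norm_sub hr
  have hcl : ∀ V : Ultrafilter ℕ, (V : Filter ℕ) ≤ atTop → ∃ a ∈ S, WeakTendsto x V a := fun V hV =>
    let ⟨a, ha⟩ := exists_weakTendsto_of_norm_le hR V
    ⟨a, hclust V hV a ha, ha⟩
  obtain ⟨V₀, hV₀⟩ := Ultrafilter.exists_le (atTop : Filter ℕ)
  obtain ⟨a, haS, ha⟩ := hcl V₀ hV₀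
  refine ⟨a, haS, fun u => (tendsto_iff_ultrafilter _ _ _).2 fun V hV => ?_⟩
  obtain ⟨b, hbS, hb⟩ := hcl V hV
  obtain ⟨ra, hra⟩ := hlim a haS
  obtain ⟨rb, hrb⟩ := hlim b hbS
  rw [ha.eq_of_tendsto_norm_sub hra hrb hV₀ hV hb]
  exact hb u

theorem WeakTendsto.of_tendsto_norm_sub {ι : Type*} {l : Filter ι} {x w : ι → H} {a : H}
    (hx : WeakTendsto x l a) (hxw : Tendsto (fun i => ‖x i - w i‖) l (𝓝 0)) :
    WeakTendsto w l a := fun u => by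
  have hinner : Tendsto (fun i => ⟪x i - w i, u⟫) l (𝓝 0) :=
    squeeze_zero_norm (fun i => norm_inner_le_norm _ _) (by simpa using hxw.mul_const ‖u‖)
  simpa [inner_sub_left] using (hx u).sub hinner

theorem WeakTendsto.mem_of_forall_inner_le_zero {ι : Type*} {l : Filter ι} [l.NeBot]
    {C : Set H} {w : ι → H} {a q : H} (hw : WeakTendsto w l a) (hwC : ∀ i, w i ∈ C) (hq : q ∈ C)
    (hqa : ∀ c ∈ C, ⟪a - q, c - q⟫ ≤ 0) : a ∈ C := by
  have hlim : Tendsto (fun i => ⟪w i, a - q⟫ - ⟪q, a - q⟫) l (𝓝 (⟪a, a - q⟫ - ⟪q, a - q⟫)) :=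
    (hw (a - q)).sub_const _
  have h := le_of_tendsto hlim (Eventually.of_forall fun i => by
    rw [← inner_sub_left, real_inner_comm]
    exact hqa _ (hwC i))
  rw [← inner_sub_left, real_inner_self_nonpos, sub_eq_zero] at h
  exact h ▸ hq

theorem mem_viSol_of_forall_inner_sub_nonneg {C : Set H} {F : H → H} (hC : Convex ℝ C)
    (hF : Continuous F) {a : H} (ha : a ∈ C) (h : ∀ z ∈ C, 0 ≤ ⟪F z, z - a⟫) :
    a ∈ viSol C F := by
  refine ⟨ha, fun z hz => ?_⟩
  have hcont : Continuous fun t : ℝ => ⟪F (a + t • (z - a)), z - a⟫ := by fun_prop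
  have hlim := (hcont.tendsto 0).mono_left (nhdsWithin_le_nhds (s := Set.Ioi 0))
  simp only [zero_smul, add_zero] at hlim
  refine ge_of_tendsto hlim ?_
  filter_upwards [Ioo_mem_nhdsGT one_pos] with t ht
  have hat := h _ (hC.add_smul_sub_mem ha hz ⟨ht.1.le, ht.2.le⟩)
  rw [add_sub_cancel_left, real_inner_smul_right] at hat
  exact (mul_nonneg_iff_of_pos_left ht.1).1 hat

theorem neg_mul_le_inner_of_inner_le_zero {F : H → H}
    (hmono : ∀ u v : H, 0 ≤ ⟪F u - F v, u - v⟫) {x w z : H} {L b β : ℝ}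
    (hLip : ‖F x - F w‖ ≤ L * ‖x - w‖) (hb : 0 < b) (hβ : b ≤ β)
    (hproj : ⟪x - β • F x - w, z - w⟫ ≤ 0) :
    -((L + b⁻¹) * (‖x - w‖ * ‖z - w‖)) ≤ ⟪F z, z - w⟫ := by
  have hβ0 : 0 < β := hb.trans_le hβ
  have hFx : -(b⁻¹ * (‖x - w‖ * ‖z - w‖)) ≤ ⟪F x, z - w⟫ := by
    rw [sub_right_comm, inner_sub_left, real_inner_smul_left] at hproj
    have h1 : -(‖x - w‖ * ‖z - w‖) ≤ ⟪x - w, z - w⟫ := neg_le_of_abs_le (abs_real_inner_le_norm _ _)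
    have h2 : -(‖x - w‖ * ‖z - w‖) / β ≤ ⟪F x, z - w⟫ := by
      rw [div_le_iff₀ hβ0]
      linarith [mul_comm β ⟪F x, z - w⟫]
    refine le_trans ?_ h2
    rw [neg_div, ← div_eq_inv_mul]
    gcongr
  have hlip : ⟪F x - F w, z - w⟫ ≤ L * (‖x - w‖ * ‖z - w‖) :=
    (real_inner_le_norm _ _).trans (by rw [← mul_assoc]; gcongr)
  have hmonoz := hmono z w
  rw [inner_sub_left] at hlip hmonoz
  linarith

theorem WeakTendsto.inner_sub_nonneg {ι : Type*} {l : Filter ι} [l.NeBot] {C : Set H}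
    {F : H → H} (hmono : ∀ u v : H, 0 ≤ ⟪F u - F v, u - v⟫) {L b R : ℝ}
    (hLip : ∀ u v : H, ‖F u - F v‖ ≤ L * ‖u - v‖) (hb : 0 < b) {x w : ι → H} {β : ι → ℝ}
    (hβ : ∀ i, b ≤ β i) (hR : ∀ i, ‖x i‖ ≤ R)
    (hproj : ∀ i, ∀ z ∈ C, ⟪x i - β i • F (x i) - w i, z - w i⟫ ≤ 0)
    (hxw : Tendsto (fun i => ‖x i - w i‖) l (𝓝 0)) {a : H} (hw : WeakTendsto w l a) :
    ∀ z ∈ C, 0 ≤ ⟪F z, z - a⟫ := by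
  intro z hz
  have hdist : ∀ i, ‖z - w i‖ ≤ ‖z‖ + R + ‖x i - w i‖ := fun i => calc
    ‖z - w i‖ = ‖(z - x i) + (x i - w i)‖ := by rw [sub_add_sub_cancel]
    _ ≤ ‖z‖ + ‖x i‖ + ‖x i - w i‖ := (norm_add_le _ _).trans (by gcongr; exact norm_sub_le _ _)
    _ ≤ ‖z‖ + R + ‖x i - w i‖ := by gcongr; exact hR i
  have hprod : Tendsto (fun i => ‖x i - w i‖ * ‖z - w i‖) l (𝓝 0) := by
    refine squeeze_zero (fun i => by positivity) (fun i => mul_le_mul_of_nonneg_left (hdist i)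
      (norm_nonneg _)) ?_
    simpa using hxw.mul (tendsto_const_nhds.add hxw)
  have hlim : Tendsto (fun i => ⟪F z, z - w i⟫) l (𝓝 ⟪F z, z - a⟫) := by
    simpa [inner_sub_right, real_inner_comm] using (hw (F z)).const_sub ⟪F z, z⟫
  simpa using le_of_tendsto_of_tendsto' (hprod.const_mul (L + b⁻¹)).neg hlim fun i =>
    neg_mul_le_inner_of_inner_le_zero hmono (hLip _ _) hb (hβ i) (hproj i z hz)

theorem WeakTendsto.mem_viSol {ι : Type*} {l : Filter ι} [l.NeBot] {C : Set H} {P F : H → H}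
    (hC : Convex ℝ C) (hPmem : ∀ u, P u ∈ C) (hPchar : ∀ u, ∀ c ∈ C, ⟪u - P u, c - P u⟫ ≤ 0)
    (hmono : ∀ u v : H, 0 ≤ ⟪F u - F v, u - v⟫) {L b R : ℝ}
    (hLip : ∀ u v : H, ‖F u - F v‖ ≤ L * ‖u - v‖) (hb : 0 < b) {x : ι → H} {β : ι → ℝ}
    (hβ : ∀ i, b ≤ β i) (hR : ∀ i, ‖x i‖ ≤ R)
    (hxw : Tendsto (fun i => ‖x i - P (x i - β i • F (x i))‖) l (𝓝 0)) {a : H}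
    (hx : WeakTendsto x l a) : a ∈ viSol C F := by
  have hw := hx.of_tendsto_norm_sub hxw
  have hF : Continuous F := (LipschitzWith.of_dist_le' (K := L) fun u v => by
    simpa [dist_eq_norm] using hLip u v).continuous
  exact mem_viSol_of_forall_inner_sub_nonneg hC hF
    (hw.mem_of_forall_inner_le_zero (fun i => hPmem _) (hPmem a) (hPchar a))
    (hw.inner_sub_nonneg hmono hLip hb hβ hR (fun i => hPchar _) hxw)

end Hilbert

section ProjectionContraction

variable {H : Type*} [NormedAddCommGroup H] [InnerProductSpace ℝ H]

/-- The direction `d^k` of the projection–contraction method, where `w = P_C(x - β F x)`. -/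
def pcDir (F : H → H) (β : ℝ) (x w : H) : H :=
  x - w - β • (F x - F w)

variable {F : H → H} {x w : H} {β ν : ℝ}

theorem one_sub_mul_sq_le_inner_pcDir (hβ : 0 ≤ β)
    (hstep : β * ‖F x - F w‖ ≤ ν * ‖x - w‖) :
    (1 - ν) * ‖x - w‖ ^ 2 ≤ ⟪x - w, pcDir F β x w⟫ := by
  have h : ⟪x - w, β • (F x - F w)⟫ ≤ ν * ‖x - w‖ ^ 2 := calc
    _ = β * ⟪x - w, F x - F w⟫ := real_inner_smul_right _ _ _
    _ ≤ β * (‖x - w‖ * ‖F x - F w‖) := mul_le_mul_of_nonneg_left (real_inner_le_norm _ _) hβ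
    _ = ‖x - w‖ * (β * ‖F x - F w‖) := by ring
    _ ≤ ‖x - w‖ * (ν * ‖x - w‖) := mul_le_mul_of_nonneg_left hstep (norm_nonneg _)
    _ = ν * ‖x - w‖ ^ 2 := by ring
  rw [pcDir, inner_sub_right, real_inner_self_eq_norm_sq]
  linarith

theorem norm_pcDir_le (hβ : 0 ≤ β) (hstep : β * ‖F x - F w‖ ≤ ν * ‖x - w‖) :
    ‖pcDir F β x w‖ ≤ (1 + ν) * ‖x - w‖ := calc
  ‖pcDir F β x w‖ ≤ ‖x - w‖ + β * ‖F x - F w‖ := by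
    rw [pcDir, ← norm_smul_of_nonneg hβ]
    exact norm_sub_le _ _
  _ ≤ (1 + ν) * ‖x - w‖ := by linarith

theorem inner_sub_pcDir_nonneg {C : Set H} (hmono : ∀ u v : H, 0 ≤ ⟪F u - F v, u - v⟫) {p : H}
    (hp : p ∈ viSol C F) (hw : w ∈ C) (hβ : 0 ≤ β) (hproj : ⟪x - β • F x - w, p - w⟫ ≤ 0) :
    0 ≤ ⟪w - p, pcDir F β x w⟫ := by
  have hsplit : ⟪w - p, pcDir F β x w⟫ =
      -⟪x - β • F x - w, p - w⟫ + β * (⟪F w - F p, w - p⟫ + ⟪F p, w - p⟫) := by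
    simp only [pcDir, inner_sub_left, inner_sub_right, real_inner_smul_right, real_inner_comm]
    ring
  rw [hsplit]
  have := mul_nonneg hβ (add_nonneg (hmono w p) (hp.2 w hw))
  linarith

theorem mul_norm_sq_eq_of_eq_inner_div {u d : H} {ρ : ℝ} (hρ : ρ = ⟪u, d⟫ / ‖d‖ ^ 2) :
    ρ * ‖d‖ ^ 2 = ⟪u, d⟫ := by
  rcases eq_or_ne d 0 with rfl | hd
  · simp
  · rw [hρ, div_mul_cancel₀ _ (by positivity)]

theorem div_mul_norm_le_mul_norm {u d : H} {ρ : ℝ} (hν0 : 0 ≤ ν) (hν1 : ν ≤ 1)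
    (hρ : ρ = ⟪u, d⟫ / ‖d‖ ^ 2) (hinner : (1 - ν) * ‖u‖ ^ 2 ≤ ⟪u, d⟫)
    (hnorm : ‖d‖ ≤ (1 + ν) * ‖u‖) : (1 - ν) / (1 + ν) * ‖u‖ ≤ ρ * ‖d‖ := by
  have hρ0 : 0 ≤ ρ := hρ ▸ div_nonneg (le_trans (by nlinarith [sq_nonneg ‖u‖]) hinner) (sq_nonneg _)
  have hkey : (1 - ν) * ‖u‖ * ‖u‖ ≤ (1 + ν) * (ρ * ‖d‖) * ‖u‖ := calc
    (1 - ν) * ‖u‖ * ‖u‖ ≤ ρ * ‖d‖ ^ 2 := by rw [mul_norm_sq_eq_of_eq_inner_div hρ]; linarith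
    _ = ρ * ‖d‖ * ‖d‖ := by ring
    _ ≤ ρ * ‖d‖ * ((1 + ν) * ‖u‖) := mul_le_mul_of_nonneg_left hnorm (by positivity)
    _ = (1 + ν) * (ρ * ‖d‖) * ‖u‖ := by ring
  rcases (norm_nonneg u).eq_or_lt with hu | hu
  · rw [← hu, mul_zero]
    positivity
  · rw [div_mul_eq_mul_div, div_le_iff₀ (by linarith)]
    linarith [le_of_mul_le_mul_right hkey hu]

theorem norm_sub_smul_sub_sq_add_le {p d : H} {ρ γ : ℝ} (hρ : ρ = ⟪x - w, d⟫ / ‖d‖ ^ 2)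
    (hxw : 0 ≤ ⟪x - w, d⟫) (hwp : 0 ≤ ⟪w - p, d⟫) (hγ : 0 ≤ γ) :
    ‖x - (γ * ρ) • d - p‖ ^ 2 + γ * (2 - γ) * (ρ * ‖d‖) ^ 2 ≤ ‖x - p‖ ^ 2 := by
  have hρ0 : 0 ≤ ρ := hρ ▸ div_nonneg hxw (sq_nonneg _)
  have hxp : ρ * ‖d‖ ^ 2 ≤ ⟪x - p, d⟫ := by
    rw [show x - p = (x - w) + (w - p) by abel, inner_add_left, mul_norm_sq_eq_of_eq_inner_div hρ]
    linarith
  rw [sub_right_comm, norm_sub_sq_real, real_inner_smul_right,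
    norm_smul_of_nonneg (mul_nonneg hγ hρ0)]
  nlinarith [mul_le_mul_of_nonneg_left hxp (mul_nonneg hγ hρ0)]

theorem norm_pcStep_sq_add_le {C : Set H} (hmono : ∀ u v : H, 0 ≤ ⟪F u - F v, u - v⟫)
    {p v : H} (hp : p ∈ viSol C F) (hw : w ∈ C) (hproj : ⟪x - β • F x - w, p - w⟫ ≤ 0)
    {γ ρ : ℝ} (hβ : 0 ≤ β) (hν0 : 0 ≤ ν) (hν1 : ν ≤ 1) (hγ0 : 0 ≤ γ) (hγ2 : γ ≤ 2)
    (hstep : β * ‖F x - F w‖ ≤ ν * ‖x - w‖)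
    (hρ : ρ = ⟪x - w, pcDir F β x w⟫ / ‖pcDir F β x w‖ ^ 2) :
    ‖x - (γ * ρ) • pcDir F β x w + v - p‖ ^ 2
        + γ * (2 - γ) * ((1 - ν) / (1 + ν)) ^ 2 * ‖x - w‖ ^ 2 ≤ (‖x - p‖ + ‖v‖) ^ 2 := by
  have hinner := one_sub_mul_sq_le_inner_pcDir hβ hstep
  have hlow := div_mul_norm_le_mul_norm hν0 hν1 hρ hinner (norm_pcDir_le hβ hstep)
  have hdesc := norm_sub_smul_sub_sq_add_le hρ
    ((mul_nonneg (sub_nonneg.2 hν1) (sq_nonneg _)).trans hinner)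
    (inner_sub_pcDir_nonneg hmono hp hw hβ hproj) hγ0
  have hκ : 0 ≤ γ * (2 - γ) := mul_nonneg hγ0 (by linarith)
  refine norm_add_sub_sq_add_le (by positivity) (le_trans ?_ hdesc)
  rw [mul_assoc _ _ (‖x - w‖ ^ 2), ← mul_pow]
  have hsq := pow_le_pow_left₀ (mul_nonneg (div_nonneg (sub_nonneg.2 hν1) (by linarith))
    (norm_nonneg _)) hlow 2
  gcongr

end ProjectionContraction

theorem stmt_14_general {H : Type*} [NormedAddCommGroup H] [InnerProductSpace ℝ H]
    [CompleteSpace H]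
    (C : Set H) (hCcv : Convex ℝ C)
    (P : H → H) (hPmem : ∀ u : H, P u ∈ C)
    (hPchar : ∀ u : H, ∀ c ∈ C, ⟪u - P u, c - P u⟫ ≤ 0)
    (F : H → H) (hmono : ∀ u v : H, 0 ≤ ⟪F u - F v, u - v⟫)
    (L : ℝ) (hLip : ∀ u v : H, ‖F u - F v‖ ≤ L * ‖u - v‖)
    (hSOL : ∃ p ∈ C, ∀ z ∈ C, 0 ≤ ⟪F p, z - p⟫)
    (ν γ : ℝ) (hν : ν ∈ Set.Ioo (0 : ℝ) 1) (hγ : γ ∈ Set.Ioo (0 : ℝ) 2)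
    (α1 α2 : ℕ → ℝ)
    (hα2 : ∀ k, α2 k ∈ Set.Icc (0 : ℝ) 1)
    (x xm y : ℕ → H) (β : ℕ → ℝ) (d : ℕ → H) (ρ : ℕ → ℝ)
    (hβinf : ∃ b > (0 : ℝ), ∀ k, b ≤ β k)
    (hy : ∀ k, y k = P (x k - β k • F (x k)) + α1 k • (x k - xm k))
    (hstep : ∀ k, β k * ‖F (x k) - F (y k - α1 k • (x k - xm k))‖ ≤
        ν * ‖x k - y k + α1 k • (x k - xm k)‖)
    (hd : ∀ k, d k = (x k - y k + α1 k • (x k - xm k)) -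
        β k • (F (x k) - F (y k - α1 k • (x k - xm k))))
    (hρ : ∀ k, ρ k = ⟪x k - y k + α1 k • (x k - xm k), d k⟫ / ‖d k‖ ^ 2)
    (hx : ∀ k, x (k + 1) = x k - (γ * ρ k) • d k + α2 k • (x k - xm k))
    (hsum2 : Summable (fun k => α2 k * ‖x k - xm k‖)) :
    ∃ xhat, (xhat ∈ C ∧ ∀ z ∈ C, 0 ≤ ⟪F xhat, z - xhat⟫) ∧
      ∀ u : H, Filter.Tendsto (fun k => ⟪x k, u⟫) Filter.atTop (nhds ⟪xhat, u⟫) := by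
  obtain ⟨b, hb0, hb⟩ := hβinf
  set w : ℕ → H := fun k => P (x k - β k • F (x k))
  set κ := γ * (2 - γ) * ((1 - ν) / (1 + ν)) ^ 2
  have hκ : 0 < κ := mul_pos (mul_pos hγ.1 (by linarith [hγ.2]))
    (pow_pos (div_pos (by linarith [hν.2]) (by linarith [hν.1])) 2)
  have hs : ∀ k, 0 ≤ α2 k * ‖x k - xm k‖ := fun k => mul_nonneg (hα2 k).1 (norm_nonneg _)
  have hdesc : ∀ p ∈ viSol C F, ∀ k,
      ‖x (k + 1) - p‖ ^ 2 + κ * ‖x k - w k‖ ^ 2 ≤ (‖x k - p‖ + α2 k * ‖x k - xm k‖) ^ 2 := by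
    intro p hp k
    have hyw : y k - α1 k • (x k - xm k) = w k := by rw [hy k]; abel
    have hxw : x k - y k + α1 k • (x k - xm k) = x k - w k := by rw [hy k]; abel
    have hdk : d k = pcDir F (β k) (x k) (w k) := by rw [hd k, hyw, hxw]; rfl
    rw [hx k, hdk, ← norm_smul_of_nonneg (hα2 k).1]
    refine norm_pcStep_sq_add_le hmono hp (hPmem _) (hPchar _ p hp.1) (hb0.le.trans (hb k))
      hν.1.le hν.2.le hγ.1.le hγ.2.le (by simpa only [hyw, hxw] using hstep k) ?_
    rw [hρ k, hxw, hdk]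
  obtain ⟨p₀, hp₀⟩ := hSOL
  have hlim : ∀ p ∈ viSol C F, ∃ r, Tendsto (fun k => ‖x k - p‖) atTop (𝓝 r) := fun p hp =>
    exists_tendsto_of_sq_add_le_sq_add (fun k => norm_nonneg _) hs hsum2
      (fun k => by positivity) (hdesc p hp)
  have hxw : Tendsto (fun k => ‖x k - w k‖) atTop (𝓝 0) :=
    tendsto_zero_of_summable_mul_sq hκ (fun k => norm_nonneg _) <|
      summable_of_sq_add_le_sq_add (a := fun k => ‖x k - p₀‖) (fun k => norm_nonneg _) hs hsum2
        (fun k => by positivity) (hdesc p₀ hp₀)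
  obtain ⟨r, hr⟩ := hlim p₀ hp₀
  obtain ⟨R, hR⟩ := exists_norm_le_of_tendsto_norm_sub hr
  exact exists_weakTendsto_of_tendsto_norm_sub ⟨p₀, hp₀⟩ hlim fun V hV a ha =>
    ha.mem_viSol hCcv hPmem hPchar hmono hLip hb0 hb hR (hxw.mono_left hV)

/-- `xm k` plays the role of `x^{k-1}` (with `xm 0` the arbitrary starting point `x^{-1}`). -/
theorem stmt_14 {H : Type*} [NormedAddCommGroup H] [InnerProductSpace ℝ H]
    [CompleteSpace H]
    (C : Set H) (hCne : C.Nonempty) (hCcl : IsClosed C) (hCcv : Convex ℝ C)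
    (P : H → H) (hPmem : ∀ u : H, P u ∈ C)
    (hPchar : ∀ u : H, ∀ c ∈ C, ⟪u - P u, c - P u⟫ ≤ 0)
    (F : H → H) (hmono : ∀ u v : H, 0 ≤ ⟪F u - F v, u - v⟫)
    (L : ℝ) (hL : 0 < L) (hLip : ∀ u v : H, ‖F u - F v‖ ≤ L * ‖u - v‖)
    (hSOL : ∃ p ∈ C, ∀ z ∈ C, 0 ≤ ⟪F p, z - p⟫)
    (ν γ : ℝ) (hν : ν ∈ Set.Ioo (0 : ℝ) 1) (hγ : γ ∈ Set.Ioo (0 : ℝ) 2)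
    (α1 α2 : ℕ → ℝ) (hα1 : ∀ k, α1 k ∈ Set.Icc (0 : ℝ) 1)
    (hα2 : ∀ k, α2 k ∈ Set.Icc (0 : ℝ) 1)
    (x xm y : ℕ → H) (β : ℕ → ℝ) (d : ℕ → H) (ρ : ℕ → ℝ)
    (hxm : ∀ k, xm (k + 1) = x k)
    (hβpos : ∀ k, 0 < β k) (hβinf : ∃ b > (0 : ℝ), ∀ k, b ≤ β k)
    (hy : ∀ k, y k = P (x k - β k • F (x k)) + α1 k • (x k - xm k))
    (hstep : ∀ k, β k * ‖F (x k) - F (y k - α1 k • (x k - xm k))‖ ≤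
        ν * ‖x k - y k + α1 k • (x k - xm k)‖)
    (hd : ∀ k, d k = (x k - y k + α1 k • (x k - xm k)) -
        β k • (F (x k) - F (y k - α1 k • (x k - xm k))))
    (hdne : ∀ k, d k ≠ 0)
    (hρ : ∀ k, ρ k = ⟪x k - y k + α1 k • (x k - xm k), d k⟫ / ‖d k‖ ^ 2)
    (hx : ∀ k, x (k + 1) = x k - (γ * ρ k) • d k + α2 k • (x k - xm k))
    (hsum1 : Summable (fun k => α1 k * ‖x k - xm k‖))
    (hsum2 : Summable (fun k => α2 k * ‖x k - xm k‖)) :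
    ∃ xhat, (xhat ∈ C ∧ ∀ z ∈ C, 0 ≤ ⟪F xhat, z - xhat⟫) ∧
      ∀ u : H, Filter.Tendsto (fun k => ⟪x k, u⟫) Filter.atTop (nhds ⟪xhat, u⟫) :=
  stmt_14_general C hCcv P hPmem hPchar F hmono L hLip hSOL ν γ hν hγ α1 α2 hα2 x xm y β d ρ hβinf
    hy hstep hd hρ hx hsum2
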